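/- The sandboxing compiler preserves robust satisfaction of noninterference (Lemma 7): Extend the Target language with a sandbox construct ⌊v := e⌋ whose semantics runs the enclosed assignment but suppresses any emitted internal label H (rules sb1/sb2: if (s, p) steps or terminates emitting H, then (s, ⌊p⌋) performs the same step or termination with no label). Define the compiler comp from Source to the extended Target homomorphically on skip, sequencing and while, and mapping every assignment v := e to ⌊v := e⌋. Then for every Source program P, if P robustly satisfies noninterference NI in Source (i.e., beh([P]) ∈ NI for the unique Source context), then comp P robustly satisfies NI in the extended Target: for every Target context CT (the identity hole or ⌈·⌉), beh(CT[comp P]) ∈ NI. -/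
import Mathlib


/-! ## States, expressions, programs -/

/-- States assign a natural number to every variable. -/
abbrev St (Var : Type) := Var → ℕ

/-- Arithmetic expressions. -/
inductive Expr (Var : Type) where
  | num (n : ℕ)
  | var (v : Var)
  | add (e1 e2 : Expr Var)
  | mul (e1 e2 : Expr Var)

/-- Evaluation of an expression in a state. -/
def Expr.eval {Var : Type} (s : St Var) : Expr Var → ℕ
  | .num n => n
  | .var v => s v
  | .add e1 e2 => e1.eval s + e2.eval s
  | .mul e1 e2 => e1.eval s * e2.eval s

/-- The set of variables occurring in an expression. -/
def Expr.vars {Var : Type} : Expr Var → Set Var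
  | .num _ => ∅
  | .var v => {v}
  | .add e1 e2 => e1.vars ∪ e2.vars
  | .mul e1 e2 => e1.vars ∪ e2.vars

/-- State update. -/
def upd {Var : Type} [DecidableEq Var] (s : St Var) (v : Var) (n : ℕ) : St Var :=
  fun x => if x = v then n else s x

/-- WHILE programs, common to Source and Target. -/
inductive Prog (Var : Type) where
  | skip
  | assign (v : Var) (e : Expr Var)
  | seq (p q : Prog Var)
  | whileE (e : Expr Var) (p : Prog Var)

/-- Step labels: the internal label `H` and the observable label `!` (bang). -/
inductive Lab where
  | h
  | bang
deriving DecidableEq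

/-- The labeled small-step semantics of programs.  A step
`PStep isHigh s p l s' r` goes from configuration `(s, p)` to state `s'`,
emitting the optional label `l`; `r = none` means the program terminates (✓)
and `r = some p'` means control continues with `p'`. -/
inductive PStep {Var : Type} [DecidableEq Var] (isHigh : Var → Prop) :
    St Var → Prog Var → Option Lab → St Var → Option (Prog Var) → Prop where
  | skip {s} :
      PStep isHigh s .skip none s none
  | asnH {s v e} : isHigh v → s v ≠ Expr.eval s e →
      PStep isHigh s (.assign v e) (some .h) (upd s v (Expr.eval s e)) none
  | asnHeq {s v e} : isHigh v → s v = Expr.eval s e →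
      PStep isHigh s (.assign v e) none s none
  | asnL {s v e} : ¬ isHigh v → (∀ x ∈ Expr.vars e, ¬ isHigh x) →
      PStep isHigh s (.assign v e) none (upd s v (Expr.eval s e)) none
  | seq1 {s p q l s'} : PStep isHigh s p l s' none →
      PStep isHigh s (.seq p q) l s' (some q)
  | seq2 {s p q l s' p'} : PStep isHigh s p l s' (some p') →
      PStep isHigh s (.seq p q) l s' (some (.seq p' q))
  | while0 {s e p} : Expr.eval s e = 0 →
      PStep isHigh s (.whileE e p) none s (some .skip)
  | while1 {s e p} : Expr.eval s e ≠ 0 →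
      PStep isHigh s (.whileE e p) none s (some (.seq p (.whileE e p)))

/-! ## Traces and behaviors -/

/-- An abstract trace: the initial state followed by, for each step, the
(optional) emitted label and the resulting state.  A finite trace implicitly
ends with the termination marker ✓; an infinite trace records infinitely many
steps. -/
inductive Trace (Var : Type) where
  | fin (s0 : St Var) (steps : List (Option Lab × St Var))
  | inf (s0 : St Var) (steps : Stream' (Option Lab × St Var))

/-- A finite, terminating run of term `p` from state `s`, producing the given
list of steps (the last step terminates with ✓). -/
inductive FinRun {Var Tm : Type}
    (Step : St Var → Tm → Option Lab → St Var → Option Tm → Prop) :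
    St Var → Tm → List (Option Lab × St Var) → Prop where
  | last {s p l s'} : Step s p l s' none →
      FinRun Step s p [(l, s')]
  | cons {s p l s' p' tr} : Step s p l s' (some p') → FinRun Step s' p' tr →
      FinRun Step s p ((l, s') :: tr)

/-- An infinite run of term `p` from state `s0`, producing the given stream of steps. -/
def InfRun {Var Tm : Type}
    (Step : St Var → Tm → Option Lab → St Var → Option Tm → Prop)
    (s0 : St Var) (p : Tm) (steps : Stream' (Option Lab × St Var)) : Prop :=
  ∃ ps : Stream' Tm, ps 0 = p ∧
    ∀ n, Step (match n with | 0 => s0 | Nat.succ m => (steps m).2)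
      (ps n) (steps n).1 (steps n).2 (some (ps (n + 1)))

/-- The behavior of a term: the set of all its abstract traces, from every
initial state. -/
def beh {Var Tm : Type}
    (Step : St Var → Tm → Option Lab → St Var → Option Tm → Prop) (p : Tm) :
    Set (Trace Var) :=
  { t | (∃ s0 steps, t = Trace.fin s0 steps ∧ FinRun Step s0 p steps) ∨
        (∃ s0 steps, t = Trace.inf s0 steps ∧ InfRun Step s0 p steps) }

/-! ## Observable events, low-equivalence and noninterference -/

/-- Observable events: states, `!` and ✓ (the label `H` is internal). -/
inductive ObsEv (Var : Type) where
  | state (s : St Var)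
  | bang
  | tick

/-- The observable events contributed by one step: the internal label `H` is
erased, `!` is kept, and the resulting state is recorded. -/
def stepObs {Var : Type} : Option Lab × St Var → List (ObsEv Var)
  | (some .bang, s) => [.bang, .state s]
  | (_, s) => [.state s]

/-- The sequence of observable events of a trace (internal `H` events erased),
as a partial function on positions. -/
def Trace.obs {Var : Type} : Trace Var → ℕ → Option (ObsEv Var)
  | .fin s0 steps => fun n =>
      (ObsEv.state s0 :: (steps.flatMap stepObs ++ [ObsEv.tick]))[n]?
  | .inf s0 steps => fun n =>
      (ObsEv.state s0 :: (List.range (n + 1)).flatMap (fun i => stepObs (steps i)))[n]?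

/-- The initial state of a trace. -/
def Trace.init {Var : Type} : Trace Var → St Var
  | .fin s0 _ => s0
  | .inf s0 _ => s0

/-- Low-equivalence of states: agreement on every low variable. -/
def stLowEq {Var : Type} (isHigh : Var → Prop) (s1 s2 : St Var) : Prop :=
  ∀ v, ¬ isHigh v → s1 v = s2 v

/-- Low-equivalence of observable events. -/
def evLowEq {Var : Type} (isHigh : Var → Prop) : ObsEv Var → ObsEv Var → Prop
  | .state s1, .state s2 => stLowEq isHigh s1 s2
  | .bang, .bang => True
  | .tick, .tick => True
  | _, _ => False

/-- Low-equivalence lifted to optional observable events (positions beyond the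
end of both traces match). -/
def oLowEq {Var : Type} (isHigh : Var → Prop) :
    Option (ObsEv Var) → Option (ObsEv Var) → Prop
  | some a, some b => evLowEq isHigh a b
  | none, none => True
  | _, _ => False

/-- Low-equivalence of traces: pointwise low-equivalence of their sequences of
observable events. -/
def traceLowEq {Var : Type} (isHigh : Var → Prop) (t1 t2 : Trace Var) : Prop :=
  ∀ n, oLowEq isHigh (t1.obs n) (t2.obs n)

/-- Noninterference as a hyperproperty. -/
def NI {Var : Type} (isHigh : Var → Prop) : Set (Set (Trace Var)) :=
  { π | ∀ t1 ∈ π, ∀ t2 ∈ π,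
      stLowEq isHigh t1.init t2.init → traceLowEq isHigh t1 t2 }

/-! ## The extended Target language with sandboxed assignments -/

/-- Programs of the extended Target language: WHILE programs plus the sandboxed
assignment `⌊v := e⌋`. -/
inductive TProg (Var : Type) where
  | skip
  | assign (v : Var) (e : Expr Var)
  | seq (p q : TProg Var)
  | whileE (e : Expr Var) (p : TProg Var)
  | sb (v : Var) (e : Expr Var)

/-- Erasure of the internal label `H`. -/
def eraseH : Option Lab → Option Lab
  | some .h => none
  | l => l

/-- The labeled small-step semantics of extended Target programs.  The sandbox
`⌊v := e⌋` runs the enclosed assignment but suppresses any emitted internal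
label `H` (rules sb1/sb2). -/
inductive TPStep {Var : Type} [DecidableEq Var] (isHigh : Var → Prop) :
    St Var → TProg Var → Option Lab → St Var → Option (TProg Var) → Prop where
  | skip {s} :
      TPStep isHigh s .skip none s none
  | asnH {s v e} : isHigh v → s v ≠ Expr.eval s e →
      TPStep isHigh s (.assign v e) (some .h) (upd s v (Expr.eval s e)) none
  | asnHeq {s v e} : isHigh v → s v = Expr.eval s e →
      TPStep isHigh s (.assign v e) none s none
  | asnL {s v e} : ¬ isHigh v → (∀ x ∈ Expr.vars e, ¬ isHigh x) →
      TPStep isHigh s (.assign v e) none (upd s v (Expr.eval s e)) none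
  | seq1 {s p q l s'} : TPStep isHigh s p l s' none →
      TPStep isHigh s (.seq p q) l s' (some q)
  | seq2 {s p q l s' p'} : TPStep isHigh s p l s' (some p') →
      TPStep isHigh s (.seq p q) l s' (some (.seq p' q))
  | while0 {s e p} : Expr.eval s e = 0 →
      TPStep isHigh s (.whileE e p) none s (some .skip)
  | while1 {s e p} : Expr.eval s e ≠ 0 →
      TPStep isHigh s (.whileE e p) none s (some (.seq p (.whileE e p)))
  | sb {s v e l s'} : TPStep isHigh s (.assign v e) l s' none →
      TPStep isHigh s (.sb v e) (eraseH l) s' none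

/-- Whole extended Target terms: a program plugged either into the identity
hole or into the context `⌈·⌉`. -/
inductive TTm (Var : Type) where
  | plain (p : TProg Var)
  | banged (p : TProg Var)

/-- The context `⌈·⌉` re-labels the internal label `H` to the observable `!`. -/
def relabel : Option Lab → Option Lab
  | some .h => some .bang
  | l => l

/-- The semantics of whole extended Target terms: `⌈p⌉` steps exactly as `p`
except that every step labeled `H` is re-labeled to `!`. -/
inductive TStep {Var : Type} [DecidableEq Var] (isHigh : Var → Prop) :
    St Var → TTm Var → Option Lab → St Var → Option (TTm Var) → Prop where
  | plain {s p l s' r} : TPStep isHigh s p l s' r →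
      TStep isHigh s (.plain p) l s' (r.map TTm.plain)
  | banged {s p l s' r} : TPStep isHigh s p l s' r →
      TStep isHigh s (.banged p) (relabel l) s' (r.map TTm.banged)

/-- Target contexts: the identity hole and `⌈·⌉`. -/
inductive CtxT where
  | hole
  | bang

/-- Plugging a program into a Target context. -/
def plugT {Var : Type} : CtxT → TProg Var → TTm Var
  | .hole, p => .plain p
  | .bang, p => .banged p

/-- The sandboxing compiler: homomorphic on skip, sequencing and while, and
mapping every assignment `v := e` to the sandboxed assignment `⌊v := e⌋`. -/
def comp {Var : Type} : Prog Var → TProg Var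
  | .skip => .skip
  | .assign v e => .sb v e
  | .seq p q => .seq (comp p) (comp q)
  | .whileE e p => .whileE e (comp p)

section Aux
variable {Var : Type} [DecidableEq Var] {isHigh : Var → Prop}

lemma pstep_not_bang {s p l s' r} (h : PStep isHigh s p l s' r) :
    l ≠ some Lab.bang := by
  induction h <;> simp_all

lemma stepObs_eq {l l' : Option Lab} (h : l ≠ some Lab.bang)
    (h' : l' ≠ some Lab.bang) (s : St Var) :
    stepObs (l, s) = stepObs (l', s) := by
  match l, l' with
  | none, none => rfl
  | none, some .h => rfl
  | some .h, none => rfl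
  | some .h, some .h => rfl
  | some .bang, _ => exact absurd rfl h
  | _, some .bang => exact absurd rfl h'

lemma tpstep_comp : ∀ (p : Prog Var) {s l s' r},
    TPStep isHigh s (comp p) l s' r →
    l = none ∧ ∃ l' r', PStep isHigh s p l' s' r' ∧ r = Option.map comp r' := by
  intro p
  induction p with
  | skip =>
    intro s l s' r h; cases h
    exact ⟨rfl, none, none, .skip, rfl⟩
  | assign v e =>
    intro s l s' r h
    cases h with
    | sb h' =>
      cases h' with
      | asnH h1 h2 => exact ⟨rfl, some .h, none, .asnH h1 h2, rfl⟩
      | asnHeq h1 h2 => exact ⟨rfl, none, none, .asnHeq h1 h2, rfl⟩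
      | asnL h1 h2 => exact ⟨rfl, none, none, .asnL h1 h2, rfl⟩
  | seq p q ihp ihq =>
    intro s l s' r h
    cases h with
    | seq1 h' =>
      obtain ⟨rfl, l', r', hstep, hr⟩ := ihp h'
      cases r' with
      | none => exact ⟨rfl, l', some q, .seq1 hstep, rfl⟩
      | some p0 => simp at hr
    | seq2 h' =>
      obtain ⟨rfl, l', r', hstep, hr⟩ := ihp h'
      cases r' with
      | none => simp at hr
      | some p0 =>
        simp only [Option.map, Option.some.injEq] at hr
        subst hr
        exact ⟨rfl, l', some (.seq p0 q), .seq2 hstep, rfl⟩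
  | whileE e p ih =>
    intro s l s' r h
    cases h with
    | while0 h0 => exact ⟨rfl, none, some .skip, .while0 h0, rfl⟩
    | while1 h0 => exact ⟨rfl, none, some (.seq p (.whileE e p)), .while1 h0, rfl⟩

lemma tstep_comp (CT : CtxT) (p : Prog Var) {s l s' r}
    (h : TStep isHigh s (plugT CT (comp p)) l s' r) :
    l = none ∧ ∃ l' r', PStep isHigh s p l' s' r' ∧
      r = Option.map (fun q => plugT CT (comp q)) r' := by
  cases CT with
  | hole =>
    cases h with
    | plain h' =>
      obtain ⟨rfl, l', r', hstep, rfl⟩ := tpstep_comp p h'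
      exact ⟨rfl, l', r', hstep, by cases r' <;> rfl⟩
  | bang =>
    cases h with
    | banged h' =>
      obtain ⟨rfl, l', r', hstep, rfl⟩ := tpstep_comp p h'
      exact ⟨rfl, l', r', hstep, by cases r' <;> rfl⟩

lemma finrun_comp {CT : CtxT} {s t steps}
    (h : FinRun (TStep isHigh) s t steps) :
    ∀ p, t = plugT CT (comp p) →
    ∃ steps', FinRun (PStep isHigh) s p steps' ∧
      steps.flatMap stepObs = steps'.flatMap stepObs := by
  induction h with
  | @last s p0 l s' hst =>
    intro p hp; subst hp
    obtain ⟨rfl, l', r', hstep, hr⟩ := tstep_comp CT p hst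
    cases r' with
    | some q => simp at hr
    | none =>
      refine ⟨[(l', s')], .last hstep, ?_⟩
      simp only [List.flatMap_cons, List.flatMap_nil, List.append_nil]
      exact stepObs_eq (by simp) (pstep_not_bang hstep) _
  | @cons s p0 l s' p0' tr hst hrest ih =>
    intro p hp; subst hp
    obtain ⟨rfl, l', r', hstep, hr⟩ := tstep_comp CT p hst
    cases r' with
    | none => simp at hr
    | some q =>
      simp only [Option.map, Option.some.injEq] at hr
      obtain ⟨tr', hrun, hobs⟩ := ih q hr
      refine ⟨(l', s') :: tr', .cons hstep hrun, ?_⟩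
      simp only [List.flatMap_cons, hobs]
      rw [stepObs_eq (l := (none : Option Lab)) (by simp) (pstep_not_bang hstep) s']

lemma infrun_comp {CT : CtxT} {s0 p steps}
    (h : InfRun (TStep isHigh) s0 (plugT CT (comp p)) steps) :
    ∃ steps', InfRun (PStep isHigh) s0 p steps' ∧
      ∀ n, stepObs (steps n) = stepObs (steps' n) := by
  obtain ⟨ps, hps0, hpsstep⟩ := h
  have key : ∀ n (q : Prog Var), ps n = plugT CT (comp q) →
      ∃ q' : Prog Var, ps (n+1) = plugT CT (comp q') ∧ (steps n).1 = none ∧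
        ∃ l', l' ≠ some Lab.bang ∧
          PStep isHigh (match n with | 0 => s0 | Nat.succ m => (steps m).2)
            q l' (steps n).2 (some q') := by
    intro n q hq
    have hstep := hpsstep n
    rw [hq] at hstep
    obtain ⟨hl, l', r', hstep', hr⟩ := tstep_comp CT q hstep
    cases r' with
    | none => simp at hr
    | some q' =>
      simp only [Option.map, Option.some.injEq] at hr
      exact ⟨q', hr, hl, l', pstep_not_bang hstep', hstep'⟩
  let f : ∀ n : ℕ, {q : Prog Var // ps n = plugT CT (comp q)} :=
    fun n => Nat.rec ⟨p, hps0⟩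
      (fun m ih => ⟨Classical.choose (key m ih.1 ih.2),
        (Classical.choose_spec (key m ih.1 ih.2)).1⟩) n
  have hspec : ∀ n, ps (n+1) = plugT CT (comp ((f (n+1)).1)) ∧
      (steps n).1 = none ∧
      ∃ l', l' ≠ some Lab.bang ∧
        PStep isHigh (match n with | 0 => s0 | Nat.succ m => (steps m).2)
          ((f n).1) l' (steps n).2 (some ((f (n+1)).1)) := by
    intro n
    exact ⟨(f (n+1)).2, (Classical.choose_spec (key n (f n).1 (f n).2)).2.1,
      (Classical.choose_spec (key n (f n).1 (f n).2)).2.2⟩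
  refine ⟨fun n => (Classical.choose (hspec n).2.2, (steps n).2), ⟨fun n => (f n).1, rfl, ?_⟩, ?_⟩
  · intro n
    exact (Classical.choose_spec (hspec n).2.2).2
  · intro n
    have h1 : (steps n).1 = none := (hspec n).2.1
    have h2 : Classical.choose (hspec n).2.2 ≠ some Lab.bang :=
      (Classical.choose_spec (hspec n).2.2).1
    have : steps n = ((steps n).1, (steps n).2) := rfl
    rw [this, h1]
    exact stepObs_eq (by simp) h2 _

lemma beh_comp (CT : CtxT) (P : Prog Var) :
    ∀ t ∈ beh (TStep isHigh) (plugT CT (comp P)),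
    ∃ t' ∈ beh (PStep isHigh) P, t'.init = t.init ∧ t'.obs = t.obs := by
  intro t ht
  rcases ht with ⟨s0, steps, rfl, hrun⟩ | ⟨s0, steps, rfl, hrun⟩
  · obtain ⟨steps', hrun', hobs⟩ := finrun_comp hrun P rfl
    refine ⟨Trace.fin s0 steps', Or.inl ⟨s0, steps', rfl, hrun'⟩, rfl, ?_⟩
    funext n
    simp only [Trace.obs, hobs]
  · obtain ⟨steps', hrun', hobs⟩ := infrun_comp hrun
    refine ⟨Trace.inf s0 steps', Or.inr ⟨s0, steps', rfl, hrun'⟩, rfl, ?_⟩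
    funext n
    have : (fun i => stepObs (steps i)) = fun i => stepObs (steps' i) :=
      funext hobs
    simp only [Trace.obs, this]

end Aux

/-- Lemma 7: the sandboxing compiler preserves robust satisfaction of
noninterference.  If a Source program `P` robustly satisfies `NI` in Source
(whose only context is the identity), then `comp P` robustly satisfies `NI`
in the extended Target, i.e. in every Target context. -/
theorem sandbox_compiler_robust_NI
    {Var : Type} [DecidableEq Var] (isHigh : Var → Prop) (P : Prog Var)
    (hP : beh (PStep isHigh) P ∈ NI isHigh) :
    ∀ CT : CtxT, beh (TStep isHigh) (plugT CT (comp P)) ∈ NI isHigh := by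
  intro CT t1 ht1 t2 ht2 hlow
  obtain ⟨t1', h1b, h1i, h1o⟩ := beh_comp CT P t1 ht1
  obtain ⟨t2', h2b, h2i, h2o⟩ := beh_comp CT P t2 ht2
  have h := hP t1' h1b t2' h2b (by rw [h1i, h2i]; exact hlow)
  intro n
  rw [← h1o, ← h2o]
  exact h n
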